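/- arXiv:1903.07640 — 2 statements merged into one kernel-verified Lean document; each statement's English description precedes it below -/
import Mathlib

section
/- Let M be a matroid on a finite ground set E, let 𝓕 = (F_0, …, F_d) be any flag of flats of M, and let i be an index with 0 ≤ i ≤ d − 1. Then Σ_{F' flat, F_i ⋖ F' ⊆ F_{i+1}} e_{F'} = e_{F_{i+1}} + (m − 1) · e_{F_i}, where m ≥ 1 is the number of flats F' of M with F_i ⋖ F' ⊆ F_{i+1}; in particular this vector lies in the cone 𝔠_𝓕. -/
open scoped BigOperators

/-- The `0-1` indicator vector `e_F ∈ ℝ^E` of a subset `F ⊆ E`. -/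
noncomputable def eVec {α : Type*} (F : Set α) : α → ℝ := F.indicator 1

/-- `F'` covers `F` in the lattice of flats of `M`: both are flats, `F ⊊ F'`,
and there is no flat strictly between them. -/
def MCov {α : Type*} (M : Matroid α) (F F' : Set α) : Prop :=
  M.IsFlat F ∧ M.IsFlat F' ∧ F ⊂ F' ∧ ¬ ∃ F'', M.IsFlat F'' ∧ F ⊂ F'' ∧ F'' ⊂ F'

/-- A flag of flats `∅ = F_0 ⊊ F_1 ⊊ ⋯ ⊊ F_d = E` of a matroid `M`. -/
def IsFlag {α : Type*} (M : Matroid α) (d : ℕ) (𝓕 : Fin (d + 1) → Set α) : Prop :=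
  (∀ j, M.IsFlat (𝓕 j)) ∧ StrictMono 𝓕 ∧ 𝓕 0 = ∅ ∧ 𝓕 (Fin.last d) = M.E

/-- The cone `𝔠_𝓕 = { Σ_j λ_j e_{F_j} : λ_j ≥ 0 for j = 1, …, d−1 }` of a flag. -/
def flagCone {α : Type*} (d : ℕ) (𝓕 : Fin (d + 1) → Set α) : Set (α → ℝ) :=
  { x | ∃ lam : Fin (d + 1) → ℝ,
      (∀ j : Fin (d + 1), (j : ℕ) ≠ 0 → (j : ℕ) ≠ d → 0 ≤ lam j) ∧
      x = ∑ j, lam j • eVec (𝓕 j) }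

/-! For a flat `F` and `x ∉ F`, closure exchange shows that `cl (F ∪ {x})` is the unique flat
covering `F` that contains `x`. So the covers of `F_i` inside `F_{i+1}` all contain `F_i` and
partition `F_{i+1} \ F_i`: at a coordinate `y` the sum of their indicator vectors is `m` on
`F_i`, `1` on `F_{i+1} \ F_i` and `0` elsewhere, which is `e_{F_{i+1}} + (m - 1) e_{F_i}`. -/

section

variable {α : Type*}

lemma Matroid.IsFlat.closure_subset_of_subset {M : Matroid α} {F X : Set α} (hF : M.IsFlat F)
    (hXF : X ⊆ F) : M.closure X ⊆ F :=
  hF.closure ▸ M.closure_subset_closure hXF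

section Covers

variable {M : Matroid α} {F F' G : Set α} {x : α}

lemma mcov_closure_insert (hF : M.IsFlat F) (hx : x ∈ M.E \ F) :
    MCov M F (M.closure (insert x F)) := by
  have hins : insert x F ⊆ M.E := Set.insert_subset hx.1 hF.subset_ground
  have hxcl : x ∈ M.closure (insert x F) := M.subset_closure _ hins (Set.mem_insert _ _)
  refine ⟨hF, M.isFlat_closure _,
    ⟨(Set.subset_insert _ _).trans (M.subset_closure _ hins), fun h ↦ hx.2 (h hxcl)⟩, ?_⟩
  rintro ⟨F'', hF'', hFF'', hF''cl⟩
  obtain ⟨y, hyF'', hyF⟩ := Set.exists_of_ssubset hFF''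
  -- exchange: `y ∈ cl (F + x) \ cl F` forces `x ∈ cl (F + y) ⊆ F''`
  have hxy : x ∈ M.closure (insert y F) :=
    Matroid.mem_closure_insert (by rwa [hF.closure]) (hF''cl.subset hyF'')
  have hxF'' : x ∈ F'' := hF''.closure_subset_of_subset (Set.insert_subset hyF'' hFF''.subset) hxy
  exact hF''cl.not_subset (hF''.closure_subset_of_subset (Set.insert_subset hxF'' hFF''.subset))

lemma MCov.eq_closure_insert (h : MCov M F F') (hx : x ∈ F' \ F) :
    F' = M.closure (insert x F) := by
  obtain ⟨hF, hF', hFF', hno⟩ := h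
  have hsub : M.closure (insert x F) ⊆ F' :=
    hF'.closure_subset_of_subset (Set.insert_subset hx.1 hFF'.subset)
  have hcov := mcov_closure_insert hF ⟨hF'.subset_ground hx.1, hx.2⟩
  by_contra hne
  exact hno ⟨_, hcov.2.1, hcov.2.2.1, hsub.ssubset_of_ne (Ne.symm hne)⟩

lemma existsUnique_mcov_mem (hF : M.IsFlat F) (hG : M.IsFlat G) (hFG : F ⊆ G)
    (hx : x ∈ G \ F) : ∃! F', (MCov M F F' ∧ F' ⊆ G) ∧ x ∈ F' := by
  have hxE : x ∈ M.E := hG.subset_ground hx.1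
  refine ⟨M.closure (insert x F), ⟨⟨mcov_closure_insert hF ⟨hxE, hx.2⟩,
    hG.closure_subset_of_subset (Set.insert_subset hx.1 hFG)⟩,
    M.mem_closure_of_mem' (Set.mem_insert _ _) hxE⟩, ?_⟩
  rintro F' ⟨⟨hcov, -⟩, hxF'⟩
  exact hcov.eq_closure_insert ⟨hxF', hx.2⟩

end Covers

lemma finsum_mem_eVec_apply {S : Set (Set α)} (hS : S.Finite) (y : α) :
    (∑ᶠ A ∈ S, eVec A) y = ({A ∈ S | y ∈ A}.ncard : ℝ) := by
  classical
  rw [← hS.coe_toFinset, finsum_mem_coe_finset, Finset.sum_apply]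
  simp only [eVec, Set.indicator_apply, Pi.one_apply, Finset.sum_boole]
  rw [← Set.ncard_coe_finset]
  congr
  ext A
  simp

lemma finsum_mem_eVec_eq {S : Set (Set α)} {F G : Set α} (hS : S.Finite) (hFG : F ⊆ G)
    (hbetween : ∀ A ∈ S, F ⊆ A ∧ A ⊆ G) (hunique : ∀ y ∈ G \ F, ∃! A, A ∈ S ∧ y ∈ A) :
    ∑ᶠ A ∈ S, eVec A = eVec G + ((S.ncard : ℝ) - 1) • eVec F := by
  classical
  funext y
  rw [finsum_mem_eVec_apply hS]
  simp only [Pi.add_apply, Pi.smul_apply, smul_eq_mul, eVec, Set.indicator_apply, Pi.one_apply]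
  by_cases hyF : y ∈ F
  · have : {A ∈ S | y ∈ A} = S :=
      Set.sep_eq_self_iff_mem_true.2 fun A hA ↦ (hbetween A hA).1 hyF
    simp [this, hyF, hFG hyF]
  by_cases hyG : y ∈ G
  · obtain ⟨A, hA, hAuniq⟩ := hunique y ⟨hyG, hyF⟩
    have : {A ∈ S | y ∈ A} = {A} :=
      Set.eq_singleton_iff_unique_mem.2 ⟨hA, fun B hB ↦ hAuniq B hB⟩
    simp [this, hyF, hyG]
  · have : {A ∈ S | y ∈ A} = ∅ :=
      Set.sep_eq_empty_iff_mem_false.2 fun A hA hyA ↦ hyG ((hbetween A hA).2 hyA)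
    simp [this, hyF, hyG]

lemma eVec_add_smul_eVec_mem_flagCone {d : ℕ} (𝓕 : Fin (d + 1) → Set α) (a b : Fin (d + 1))
    {c : ℝ} (hc : 0 ≤ c) : eVec (𝓕 b) + c • eVec (𝓕 a) ∈ flagCone d 𝓕 := by
  classical
  have hlam : (0 : Fin (d + 1) → ℝ) ≤ Pi.single b 1 + Pi.single a c :=
    add_nonneg (Pi.single_nonneg.2 zero_le_one) (Pi.single_nonneg.2 hc)
  refine ⟨Pi.single b 1 + Pi.single a c, fun j _ _ ↦ hlam j, ?_⟩
  simp [add_smul, Finset.sum_add_distrib, Pi.single_apply, ite_smul]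

end

/-- For any flag of flats `𝓕 = (F_0, …, F_d)` and any `0 ≤ i ≤ d−1`,
`Σ_{F_i ⋖ F' ⊆ F_{i+1}} e_{F'} = e_{F_{i+1}} + (m−1)·e_{F_i}` where `m ≥ 1` is the
number of such flats `F'`; in particular this vector lies in `𝔠_𝓕`. -/
theorem flag_cover_sum {α : Type*} [Fintype α] (M : Matroid α)
    (d : ℕ) (𝓕 : Fin (d + 1) → Set α) (h𝓕 : IsFlag M d 𝓕)
    (i : ℕ) (hi : i + 1 ≤ d)
    (m : ℕ)
    (hm : m = Set.ncard {F' : Set α | MCov M (𝓕 ⟨i, by omega⟩) F' ∧ F' ⊆ 𝓕 ⟨i + 1, by omega⟩}) :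
    1 ≤ m ∧
    (∑ᶠ F' ∈ {F' : Set α | MCov M (𝓕 ⟨i, by omega⟩) F' ∧ F' ⊆ 𝓕 ⟨i + 1, by omega⟩}, eVec F')
      = eVec (𝓕 ⟨i + 1, by omega⟩) + ((m : ℝ) - 1) • eVec (𝓕 ⟨i, by omega⟩) ∧
    (∑ᶠ F' ∈ {F' : Set α | MCov M (𝓕 ⟨i, by omega⟩) F' ∧ F' ⊆ 𝓕 ⟨i + 1, by omega⟩}, eVec F')
      ∈ flagCone d 𝓕 := by
  set a : Fin (d + 1) := ⟨i, by omega⟩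
  set b : Fin (d + 1) := ⟨i + 1, by omega⟩
  set S := {F' : Set α | MCov M (𝓕 a) F' ∧ F' ⊆ 𝓕 b}
  have hab : 𝓕 a ⊂ 𝓕 b := h𝓕.2.1 (Fin.mk_lt_mk.2 i.lt_succ_self)
  have hunique : ∀ y ∈ 𝓕 b \ 𝓕 a, ∃! F', F' ∈ S ∧ y ∈ F' :=
    fun y hy ↦ existsUnique_mcov_mem (h𝓕.1 a) (h𝓕.1 b) hab.subset hy
  have hm1 : 1 ≤ m := by
    obtain ⟨y, hy⟩ := Set.nonempty_of_ssubset hab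
    obtain ⟨F', ⟨hF'S, -⟩, -⟩ := hunique y hy
    exact hm ▸ (Set.ncard_pos (Set.toFinite S)).2 ⟨F', hF'S⟩
  have hsum : ∑ᶠ F' ∈ S, eVec F' = eVec (𝓕 b) + ((m : ℝ) - 1) • eVec (𝓕 a) :=
    hm ▸ finsum_mem_eVec_eq (Set.toFinite S) hab.subset
      (fun F' hF' ↦ ⟨hF'.1.2.2.1.subset, hF'.2⟩) hunique
  refine ⟨hm1, hsum, hsum ▸ eVec_add_smul_eVec_mem_flagCone 𝓕 a b ?_⟩
  exact sub_nonneg.2 (Nat.one_le_cast.2 hm1)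
end

section
/- Let M be a loopless matroid on a finite ground set E, and let |B(M)| ⊆ ℝ^E denote the union of the cones 𝔠_𝓕 over all flags of flats 𝓕 of M. Then for every nonempty subset F ⊆ E, the set F is a flat of M if and only if the indicator vector e_F lies in |B(M)|. In particular, the matroid M is determined by the underlying set of its Bergman fan. -/
open scoped BigOperators

/-- The underlying set `|B(M)| = ⋃_𝓕 𝔠_𝓕` of the Bergman fan of `M`: the union of
the cones of all flags of flats of `M`. -/
def bergmanSet {α : Type*} (M : Matroid α) : Set (α → ℝ) :=
  ⋃ (d : ℕ) (𝓕 : Fin (d + 1) → Set α) (_ : IsFlag M d 𝓕), flagCone d 𝓕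

/-!
A point `x = ∑ λ_j e_{F_j}` of the cone of a flag grows along the flag: if every `F_j` containing
`a` contains `b`, then `x b - x a` is a sum of coefficients `λ_j` with `0 < j < d`, hence
nonnegative. For `x = e_F`, let `k` be least with `F ⊆ F_k` and pick `a ∈ F \ F_{k-1}`; every
`b ∈ F_k` then has `e_F b ≥ e_F a = 1`, so `F = F_k` is a flat. Conversely a nonempty flat `F` lies
in the flag `∅ ⊊ F ⊆ E`, and `e_F` is a ray of its cone. The flats determine the matroid.
-/

@[simp]
lemma eVec_apply_of_mem {α : Type*} {F : Set α} {i : α} (h : i ∈ F) : eVec F i = 1 :=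
  Set.indicator_of_mem h 1

@[simp]
lemma eVec_apply_of_notMem {α : Type*} {F : Set α} {i : α} (h : i ∉ F) : eVec F i = 0 :=
  Set.indicator_of_notMem h 1

lemma apply_le_apply_of_mem_flagCone {α : Type*} {d : ℕ} {𝓕 : Fin (d + 1) → Set α}
    {x : α → ℝ} (hx : x ∈ flagCone d 𝓕) {a b : α} (hb : b ∉ 𝓕 0)
    (ha : a ∈ 𝓕 (Fin.last d)) (hab : ∀ j, a ∈ 𝓕 j → b ∈ 𝓕 j) : x a ≤ x b := by
  obtain ⟨lam, hlam, rfl⟩ := hx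
  simp only [Finset.sum_apply, Pi.smul_apply, smul_eq_mul]
  refine Finset.sum_le_sum fun j _ => ?_
  by_cases haj : a ∈ 𝓕 j
  · simp [haj, hab j haj]
  by_cases hbj : b ∈ 𝓕 j
  · have hj0 : (j : ℕ) ≠ 0 := fun h => hb ((Fin.ext h : j = 0) ▸ hbj)
    have hjd : (j : ℕ) ≠ d := fun h => haj (Fin.ext (h.trans (Fin.val_last d).symm) ▸ ha)
    simpa [haj, hbj] using hlam j hj0 hjd
  · simp [haj, hbj]

lemma exists_eq_of_eVec_mem_flagCone {α : Type*} {d : ℕ} {𝓕 : Fin (d + 1) → Set α}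
    (hmono : Monotone 𝓕) (h0 : 𝓕 0 = ∅) {F : Set α} (hF : F ⊆ 𝓕 (Fin.last d))
    (hx : eVec F ∈ flagCone d 𝓕) : ∃ k, 𝓕 k = F := by
  obtain ⟨k, hFk, hmin⟩ : ∃ k, F ⊆ 𝓕 k ∧ ∀ j, F ⊆ 𝓕 j → k ≤ j :=
    ⟨_, wellFounded_lt.min_mem {k | F ⊆ 𝓕 k} ⟨_, hF⟩,
      fun j hj => wellFounded_lt.min_le (x := j) hj⟩
  rcases Fin.eq_zero_or_eq_succ k with rfl | ⟨k, rfl⟩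
  · exact ⟨0, by rw [h0, Set.subset_empty_iff.1 (h0 ▸ hFk : F ⊆ ∅)]⟩
  obtain ⟨a, haF, hak⟩ := Set.not_subset.1 fun h => (hmin _ h).not_gt k.castSucc_lt_succ
  refine ⟨k.succ, subset_antisymm (fun b hb => ?_) hFk⟩
  have hab : eVec F a ≤ eVec F b := by
    refine apply_le_apply_of_mem_flagCone hx (h0 ▸ Set.notMem_empty b) (hF haF) fun j haj => ?_
    refine hmono ?_ hb
    by_contra! hj
    exact hak (hmono (Fin.le_castSucc_iff.2 hj) haj)
  by_contra hbF
  norm_num [haF, hbF] at hab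

lemma eVec_mem_flagCone {α : Type*} {d : ℕ} (𝓕 : Fin (d + 1) → Set α) (k : Fin (d + 1)) :
    eVec (𝓕 k) ∈ flagCone d 𝓕 :=
  ⟨Pi.single k 1, fun j _ _ => by by_cases h : j = k <;> simp [h], by
    simp [Pi.single_apply, ite_smul]⟩

lemma mem_bergmanSet_iff {α : Type*} {M : Matroid α} {x : α → ℝ} :
    x ∈ bergmanSet M ↔ ∃ d 𝓕, IsFlag M d 𝓕 ∧ x ∈ flagCone d 𝓕 := by
  simp [bergmanSet]

lemma exists_isFlag_of_isFlat {α : Type*} {M : Matroid α} (hloopless : M.IsFlat ∅)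
    {F : Set α} (hF : M.IsFlat F) (hne : F.Nonempty) :
    ∃ d 𝓕 k, IsFlag M d 𝓕 ∧ 𝓕 k = F := by
  have h0F : ∅ ⊂ F := Set.empty_ssubset.2 hne
  by_cases hFE : F = M.E
  · refine ⟨1, ![∅, F], 1, ⟨?_, ?_, rfl, hFE⟩, rfl⟩
    · intro j; fin_cases j <;> simpa
    · simpa [Fin.strictMono_iff_lt_succ] using h0F
  · refine ⟨2, ![∅, F, M.E], 1, ⟨?_, ?_, rfl, rfl⟩, rfl⟩
    · intro j; fin_cases j <;> simp [hloopless, hF]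
    · have hFE' : F ⊂ M.E := hF.subset_ground.ssubset_of_ne hFE
      simpa [Fin.strictMono_iff_lt_succ, Fin.forall_fin_two] using ⟨hne, hFE'⟩

lemma isFlat_iff_eVec_mem_bergmanSet {α : Type*} {M : Matroid α} (hloopless : M.IsFlat ∅)
    {F : Set α} (hne : F.Nonempty) (hFE : F ⊆ M.E) :
    M.IsFlat F ↔ eVec F ∈ bergmanSet M := by
  refine ⟨fun hF => ?_, fun hx => ?_⟩
  · obtain ⟨d, 𝓕, k, hflag, rfl⟩ := exists_isFlag_of_isFlat hloopless hF hne
    exact mem_bergmanSet_iff.2 ⟨d, 𝓕, hflag, eVec_mem_flagCone 𝓕 k⟩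
  · obtain ⟨d, 𝓕, ⟨hflats, hmono, h0, hlast⟩, hx⟩ := mem_bergmanSet_iff.1 hx
    obtain ⟨k, rfl⟩ := exists_eq_of_eVec_mem_flagCone hmono.monotone h0 (hlast ▸ hFE) hx
    exact hflats k

lemma Matroid.ext_isFlat {α : Type*} {M₁ M₂ : Matroid α}
    (h : ∀ F, M₁.IsFlat F ↔ M₂.IsFlat F) : M₁ = M₂ := by
  have hE : M₁.E = M₂.E := subset_antisymm ((h _).1 M₁.ground_isFlat).subset_ground
    ((h _).2 M₂.ground_isFlat).subset_ground
  exact Matroid.ext_closure fun X => by simp_rw [Matroid.closure_def, hE, h]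

theorem flat_iff_mem_bergmanSet_general {α : Type*} (M : Matroid α)
    (hE : M.E = Set.univ) (hloopless : M.IsFlat ∅) :
    (∀ F : Set α, F.Nonempty → (M.IsFlat F ↔ eVec F ∈ bergmanSet M)) ∧
    (∀ M' : Matroid α, M'.E = Set.univ → M'.IsFlat ∅ →
      bergmanSet M = bergmanSet M' → M = M') := by
  have hflat : ∀ F : Set α, F.Nonempty → (M.IsFlat F ↔ eVec F ∈ bergmanSet M) :=
    fun F hF => isFlat_iff_eVec_mem_bergmanSet hloopless hF (hE ▸ Set.subset_univ F)
  refine ⟨hflat, fun M' hE' hloopless' hB => Matroid.ext_isFlat fun F => ?_⟩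
  rcases F.eq_empty_or_nonempty with rfl | hF
  · exact iff_of_true hloopless hloopless'
  · rw [hflat F hF, hB, isFlat_iff_eVec_mem_bergmanSet hloopless' hF (hE' ▸ Set.subset_univ F)]

/-- For a loopless matroid `M` on a finite ground set `E`, a nonempty subset
`F ⊆ E` is a flat if and only if `e_F ∈ |B(M)|`; in particular `M` is determined by
the underlying set of its Bergman fan. -/
theorem flat_iff_mem_bergmanSet {α : Type*} [Fintype α] (M : Matroid α)
    (hE : M.E = Set.univ) (hloopless : M.IsFlat ∅) :
    (∀ F : Set α, F.Nonempty → (M.IsFlat F ↔ eVec F ∈ bergmanSet M)) ∧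
    (∀ M' : Matroid α, M'.E = Set.univ → M'.IsFlat ∅ →
      bergmanSet M = bergmanSet M' → M = M') :=
  flat_iff_mem_bergmanSet_general M hE hloopless
end
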